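/- arXiv:2107.07892 — 6 statements merged into one kernel-verified Lean document; each statement's English description precedes it below -/
import Mathlib

section
/- For any negative real number x, the preimage of x under the quaternionic exponential map consists of the quaternions of the form log|x| + I(2k+1)π where I ranges over all quaternionic imaginary units (I² = -1) and k ranges over all integers; in particular this preimage is an infinite union of 2-spheres and is not discrete. -/
open Quaternion NormedSpace

/-!
Write `q = a + v` with `v` purely imaginary. Then `exp q = eᵃ (cos ‖v‖ + sin ‖v‖ · v / ‖v‖)`,
which equals the negative real `x` exactly when `eᵃ = |x|` and `cos ‖v‖ = -1`, i.e.
`‖v‖ = (2k+1)π`. The imaginary units are precisely the purely imaginary quaternions of norm one,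
so `v = (2k+1)π · I` with `I = v / ‖v‖`. Fixing one unit `I` and varying `k` already gives
infinitely many preimages.
-/

namespace Quaternion

theorem eq_coe_add_iff {R : Type*} [CommRing R] {q w : ℍ[R]} {a : R} (hw : w.re = 0) :
    q = ↑a + w ↔ q.re = a ∧ q.im = w := by
  constructor
  · rintro rfl
    refine ⟨by simp [hw], ?_⟩
    ext <;> simp [hw]
  · rintro ⟨rfl, rfl⟩
    exact (re_add_im q).symm

theorem sq_eq_neg_one_iff {q : ℍ[ℝ]} : q ^ 2 = -1 ↔ q.re = 0 ∧ ‖q‖ = 1 := by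
  constructor
  · intro hq
    have hnorm : ‖q‖ = 1 := by
      have : ‖q‖ ^ 2 = 1 := by rw [← norm_pow, hq, norm_neg, norm_one]
      exact (pow_eq_one_iff_of_nonneg (norm_nonneg q) two_ne_zero).1 this
    refine ⟨sq_eq_neg_normSq.1 ?_, hnorm⟩
    rw [hq, normSq_eq_norm_mul_self, hnorm, mul_one, coe_one]
  · rintro ⟨hre, hnorm⟩
    rw [sq_eq_neg_normSq.2 hre, normSq_eq_norm_mul_self, hnorm, mul_one, coe_one]

theorem re_smul_of_sq_eq_neg_one {I : ℍ[ℝ]} (hI : I ^ 2 = -1) (t : ℝ) : (t • I).re = 0 := by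
  simp [(sq_eq_neg_one_iff.1 hI).1]

theorem exp_eq_coe_iff_of_neg {x : ℝ} (hx : x < 0) {q : ℍ[ℝ]} :
    exp q = ↑x ↔ q.re = Real.log |x| ∧ Real.cos ‖q.im‖ = -1 := by
  have habs : 0 < |x| := abs_pos.2 hx.ne
  constructor
  · intro hq
    have hre : Real.exp q.re = |x| := by
      simpa [← Real.exp_eq_exp_ℝ, hq] using (norm_exp q).symm
    refine ⟨by rw [← hre, Real.log_exp], ?_⟩
    have h := congrArg QuaternionAlgebra.re ((exp_eq q).symm.trans hq)
    simp only [smul_add, re_add, re_smul, re_coe, smul_eq_mul, re_im, mul_zero, add_zero] at h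
    rw [← Real.exp_eq_exp_ℝ, hre, abs_of_neg hx] at h
    exact mul_left_cancel₀ (neg_ne_zero.2 hx.ne) (by linarith)
  · rintro ⟨hre, hcos⟩
    have hsin : Real.sin ‖q.im‖ = 0 := Real.sin_eq_zero_iff_cos_eq.2 (Or.inr hcos)
    rw [exp_eq, hre, hcos, hsin, zero_div, zero_smul, add_zero, ← Real.exp_eq_exp_ℝ,
      Real.exp_log habs, abs_of_neg hx]
    simp [Algebra.smul_def]

theorem cos_norm_eq_neg_one_iff {v : ℍ[ℝ]} (hv : v.re = 0) :
    Real.cos ‖v‖ = -1 ↔ ∃ (I : ℍ[ℝ]) (k : ℤ), I ^ 2 = -1 ∧ v = ((2 * k + 1) * Real.pi) • I := by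
  constructor
  · intro hcos
    obtain ⟨k, hk⟩ := Real.cos_eq_neg_one_iff.1 hcos
    have hv0 : v ≠ 0 := by
      rintro rfl
      norm_num at hcos
    refine ⟨‖v‖⁻¹ • v, k, sq_eq_neg_one_iff.2 ⟨by simp [hv], norm_smul_inv_norm hv0⟩, ?_⟩
    rw [show (2 * k + 1) * Real.pi = ‖v‖ by rw [← hk]; ring,
      smul_inv_smul₀ (norm_ne_zero_iff.2 hv0)]
  · rintro ⟨I, k, hI, rfl⟩
    rw [norm_smul, (sq_eq_neg_one_iff.1 hI).2, mul_one, Real.norm_eq_abs, Real.cos_abs,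
      Real.cos_eq_neg_one_iff]
    exact ⟨k, by ring⟩

theorem exp_eq_coe_iff_exists_of_neg {x : ℝ} (hx : x < 0) {q : ℍ[ℝ]} :
    exp q = ↑x ↔ ∃ (I : ℍ[ℝ]) (k : ℤ), I ^ 2 = -1 ∧
      q = ↑(Real.log |x|) + ((2 * (k : ℝ) + 1) * Real.pi) • I := by
  rw [exp_eq_coe_iff_of_neg hx, cos_norm_eq_neg_one_iff q.re_im]
  constructor
  · rintro ⟨hre, I, k, hI, him⟩
    exact ⟨I, k, hI, (eq_coe_add_iff (re_smul_of_sq_eq_neg_one hI _)).2 ⟨hre, him⟩⟩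
  · rintro ⟨I, k, hI, hq⟩
    obtain ⟨hre, him⟩ := (eq_coe_add_iff (re_smul_of_sq_eq_neg_one hI _)).1 hq
    exact ⟨hre, I, k, hI, him⟩

end Quaternion

/-- For any negative real `x`, the preimage of `x` under the quaternionic exponential
consists exactly of the quaternions `log |x| + ((2k+1)π) • I` with `I` an imaginary unit
and `k` an integer; moreover this preimage is infinite (in particular not a discrete set). -/
theorem quaternion_exp_preimage_neg_real (x : ℝ) (hx : x < 0) :
    {q : ℍ[ℝ] | NormedSpace.exp q = (x : ℍ[ℝ])} =
      {q : ℍ[ℝ] | ∃ (I : ℍ[ℝ]) (k : ℤ), I ^ 2 = -1 ∧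
        q = ((Real.log |x| : ℝ) : ℍ[ℝ]) + (((2 * (k : ℝ) + 1) * Real.pi) • I)} ∧
    {q : ℍ[ℝ] | NormedSpace.exp q = (x : ℍ[ℝ])}.Infinite := by
  refine ⟨Set.ext fun _ => exp_eq_coe_iff_exists_of_neg hx, ?_⟩
  obtain ⟨I, hI⟩ : ∃ I : ℍ[ℝ], I ^ 2 = -1 := ⟨Complex.I, by
    rw [sq, ← coeComplex_mul, Complex.I_mul_I]
    ext <;> simp⟩
  have hI0 : I ≠ 0 := by
    rintro rfl
    simp at hI
  have hodd : Function.Injective fun k : ℤ => (2 * (k : ℝ) + 1) * Real.pi := fun a b h => by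
    simpa [Real.pi_ne_zero] using h
  exact Set.infinite_of_injective_forall_mem
    ((add_right_injective _).comp ((smul_left_injective ℝ hI0).comp hodd))
    fun k => (exp_eq_coe_iff_exists_of_neg hx).2 ⟨I, k, hI, rfl⟩
end

section
/- No continuous function ℓ defined on any open neighborhood U ⊂ ℍ∖{0} of a strictly negative real number x₀ can satisfy exp(ℓ(q)) = q for all q ∈ U. (There is no continuous branch of the quaternionic logarithm near a negative real point.) -/
/-!
Near a real point `x`, the quaternions `x + t v` (`v` purely imaginary, `t ≠ 0`) have imaginary
part on the line `ℝ v`, and `exp p` has imaginary part parallel to that of `p`. So a continuous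
logarithm maps them into `ℝ + ℝ v`, and by continuity `ℓ x ∈ ℝ + ℝ v`. Taking `v = i` and `v = j`
shows `ℓ x` is real, whence `x = exp (ℓ x) > 0`.
-/

open Quaternion NormedSpace Filter Topology

namespace Quaternion

theorem im_mem_of_im_exp_mem {L : Submodule ℝ ℍ[ℝ]} {p : ℍ[ℝ]} (hL : (exp p).im ∈ L)
    (hne : (exp p).im ≠ 0) : p.im ∈ L := by
  obtain ⟨c, hc_eq⟩ : ∃ c : ℝ, (exp p).im = c • p.im := ⟨_, im_exp p⟩
  rw [hc_eq] at hL hne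
  have hc : c ≠ 0 := left_ne_zero_of_smul hne
  simpa only [inv_smul_smul₀ hc] using L.smul_mem c⁻¹ hL

variable {ℓ : ℍ[ℝ] → ℍ[ℝ]} {x : ℝ}

theorem im_mem_span_of_eventually_exp_eq (hℓ : ContinuousAt ℓ x)
    (hlog : ∀ᶠ q in 𝓝 (x : ℍ[ℝ]), exp (ℓ q) = q) {v : ℍ[ℝ]} (hv : v.re = 0) (hv0 : v ≠ 0) :
    (ℓ x).im ∈ ℝ ∙ v := by
  set γ : ℝ → ℍ[ℝ] := fun t => x + t • v
  have hγ : Tendsto γ (𝓝[≠] 0) (𝓝 x) := by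
    have : Continuous γ := by fun_prop
    simpa [γ] using this.tendsto 0 |>.mono_left nhdsWithin_le_nhds
  have him_γ (t : ℝ) : (γ t).im = t • v := by
    ext <;> simp [γ, hv]
  have hmem : ∀ᶠ t in 𝓝[≠] 0, (ℓ (γ t)).im ∈ ℝ ∙ v := by
    filter_upwards [hγ.eventually hlog, self_mem_nhdsWithin] with t hexp ht0
    apply im_mem_of_im_exp_mem <;> rw [hexp, him_γ]
    · exact Submodule.smul_mem _ t (Submodule.mem_span_singleton_self v)
    · exact smul_ne_zero ht0 hv0
  exact (Submodule.closed_of_finiteDimensional _).mem_of_tendsto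
    ((continuous_im.tendsto _).comp (hℓ.tendsto.comp hγ)) hmem

theorem im_eq_zero_of_eventually_exp_eq (hℓ : ContinuousAt ℓ x)
    (hlog : ∀ᶠ q in 𝓝 (x : ℍ[ℝ]), exp (ℓ q) = q) : (ℓ x).im = 0 := by
  obtain ⟨a, ha⟩ := Submodule.mem_span_singleton.1 <|
    im_mem_span_of_eventually_exp_eq hℓ hlog (v := (⟨0, 1, 0, 0⟩ : ℍ[ℝ])) rfl
      fun h => one_ne_zero (congrArg QuaternionAlgebra.imI h)
  obtain ⟨b, hb⟩ := Submodule.mem_span_singleton.1 <|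
    im_mem_span_of_eventually_exp_eq hℓ hlog (v := (⟨0, 0, 1, 0⟩ : ℍ[ℝ])) rfl
      fun h => one_ne_zero (congrArg QuaternionAlgebra.imJ h)
  have hab : a * 1 = b * 0 := congrArg QuaternionAlgebra.imI (ha.trans hb.symm)
  rw [mul_one, mul_zero] at hab
  rw [← ha, hab]
  exact zero_smul ℝ _

theorem exp_eq_coe_of_im_eq_zero {p : ℍ[ℝ]} (hp : p.im = 0) : exp p = ↑(Real.exp p.re) := by
  rw [← re_add_im p, hp, add_zero, exp_coe, re_coe, Real.exp_eq_exp_ℝ]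

end Quaternion

theorem no_continuous_quaternionic_log_near_negative_real_general
    (x₀ : ℝ) (hx₀ : x₀ < 0) (U : Set ℍ[ℝ]) (hU : IsOpen U)
    (hmem : ((x₀ : ℍ[ℝ])) ∈ U)
    (ℓ : ℍ[ℝ] → ℍ[ℝ]) (hcont : ContinuousOn ℓ U) :
    ¬ (∀ q ∈ U, exp (ℓ q) = q) := by
  intro hlog
  have hU₀ : U ∈ 𝓝 (x₀ : ℍ[ℝ]) := hU.mem_nhds hmem
  have him : (ℓ x₀).im = 0 :=
    im_eq_zero_of_eventually_exp_eq (hcont.continuousAt hU₀) (eventually_of_mem hU₀ hlog)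
  have hx : (x₀ : ℍ[ℝ]) = ↑(Real.exp (ℓ x₀).re) := by
    rw [← exp_eq_coe_of_im_eq_zero him, hlog _ hmem]
  linarith [coe_injective hx, Real.exp_pos (ℓ x₀).re]

/-- No continuous branch of the quaternionic logarithm exists on any open neighborhood
`U ⊆ ℍ \ {0}` of a strictly negative real number. -/
theorem no_continuous_quaternionic_log_near_negative_real
    (x₀ : ℝ) (hx₀ : x₀ < 0) (U : Set ℍ[ℝ]) (hU : IsOpen U)
    (hmem : ((x₀ : ℍ[ℝ])) ∈ U) (h0 : (0 : ℍ[ℝ]) ∉ U)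
    (ℓ : ℍ[ℝ] → ℍ[ℝ]) (hcont : ContinuousOn ℓ U) :
    ¬ (∀ q ∈ U, exp (ℓ q) = q) :=
  no_continuous_quaternionic_log_near_negative_real_general x₀ hx₀ U hU hmem ℓ hcont
end

section
/- Let F = (G, H) : D → ℝ_ℂ × ℝ_ℂ be an injective stem map with real components G = G₁+ιG₂, H = H₁+ιH₂ satisfying the intrinsic conditions (G₁, H₁ even in y; G₂, H₂ odd in y). Then the induced slice map f on the symmetrization of D in ℍ, defined by f(x+Iy) = (G₁(x+iy)+I G₂(x+iy), H₁(x+iy)+I H₂(x+iy)) for imaginary units I and y ≥ 0, is injective. -/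
/-!
Write `x + yI` as `liftAux I z` with `z = x + iy`. If the slice map takes the same value at
`(z, I)` and `(w, J)`, then `I = J`, `I = -J`, or all components of `F z` and `F w` are real and
equal: a component with nonzero imaginary part puts `I` in the copy `ℝ + ℝJ` of `ℂ`, where the
only square roots of `-1` are `±J`. For `I = J` injectivity of `F` gives `w = z`; for `I = -J`
the intrinsic condition rewrites `liftAux (-J)` as `liftAux J ∘ conj` and gives `w = conj z`;
otherwise `F (conj z) = F z`, so `z = conj z = w` is real.
-/

open Quaternion ComplexConjugate

/-- For `F = (G₁ + ιG₂, H₁ + ιH₂)`: `G₁, H₁` even and `G₂, H₂` odd in `y`. -/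
def IsIntrinsicOn {M : Type*} [Star M] (F : ℂ → M) (D : Set ℂ) : Prop :=
  ∀ z ∈ D, F (conj z) = star (F z)

namespace Complex

variable {A : Type*} [Ring A] [Algebra ℝ A]

theorem liftAux_neg_apply {J : A} (hJ : J * J = -1) (z : ℂ) :
    liftAux (-J) ((neg_mul_neg J J).trans hJ) z = liftAux J hJ (conj z) := by
  simp [liftAux_apply]

theorem liftAux_apply_of_im_eq_zero {I : A} (hI : I * I = -1) {z : ℂ} (hz : z.im = 0) :
    liftAux I hI z = algebraMap ℝ A z.re := by
  simp [liftAux_apply, hz]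

section

variable [Nontrivial A]

theorem liftAux_injective {I : A} (hI : I * I = -1) : Function.Injective (liftAux I hI) :=
  (liftAux I hI : ℂ →+* A).injective

variable {I J : A} (hI : I * I = -1) (hJ : J * J = -1)

theorem eq_or_eq_neg_of_liftAux_eq {a b : ℂ} (h : liftAux I hI a = liftAux J hJ b)
    (ha : a.im ≠ 0) : I = J ∨ I = -J := by
  -- `I = liftAux J c` for `c = (b - re a) / im a`, and then `c * c = -1`.
  set c : ℂ := a.im⁻¹ • (b - a.re)
  have hc : liftAux J hJ c = I := by
    rw [map_smul, map_sub, ← h, liftAux_apply, liftAux_apply_of_im_eq_zero hJ (ofReal_im _),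
      ofReal_re, add_sub_cancel_left, inv_smul_smul₀ ha]
  have hcc : c * c = Complex.I * Complex.I :=
    liftAux_injective hJ (by rw [map_mul, map_mul, hc, liftAux_apply_I, hI, hJ])
  rcases mul_self_eq_mul_self_iff.1 hcc with hc' | hc'
  · left; rw [← hc, hc', liftAux_apply_I]
  · right; rw [← hc, hc', map_neg, liftAux_apply_I]

theorem eq_and_im_eq_zero_of_liftAux_eq {a b : ℂ} (h : liftAux I hI a = liftAux J hJ b)
    (hIJ : I ≠ J) (hIJ' : I ≠ -J) : b = a ∧ a.im = 0 := by
  have ha : a.im = 0 := by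
    by_contra ha
    exact (eq_or_eq_neg_of_liftAux_eq hI hJ h ha).elim hIJ hIJ'
  have hb : b.im = 0 := by
    by_contra hb
    rcases eq_or_eq_neg_of_liftAux_eq hJ hI h.symm hb with hJI | hJI
    · exact hIJ hJI.symm
    · exact hIJ' (by rw [hJI, neg_neg])
  refine ⟨Complex.ext ?_ (hb.trans ha.symm), ha⟩
  rw [liftAux_apply_of_im_eq_zero hI ha, liftAux_apply_of_im_eq_zero hJ hb] at h
  exact (algebraMap ℝ A).injective h.symm

end

theorem liftAux_eq_liftAux_of_isIntrinsicOn [Nontrivial A]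
    {D : Set ℂ} (hD : Set.MapsTo conj D D) {F : ℂ → ℂ × ℂ} (hF : Set.InjOn F D)
    (hFD : IsIntrinsicOn F D) {I J : A} (hI : I * I = -1) (hJ : J * J = -1) {z w : ℂ}
    (hz : z ∈ D) (hw : w ∈ D)
    (h : Prod.map (liftAux I hI) (liftAux I hI) (F z) =
      Prod.map (liftAux J hJ) (liftAux J hJ) (F w)) :
    liftAux I hI z = liftAux J hJ w := by
  have hprod : ∀ {K : A} (hK : K * K = -1),
      Function.Injective (Prod.map (liftAux K hK) (liftAux K hK)) :=
    fun hK => (liftAux_injective hK).prodMap (liftAux_injective hK)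
  by_cases hIJ : I = J
  · subst hIJ
    rw [hF hz hw (hprod hI h)]
  by_cases hIJ' : I = -J
  · subst hIJ'
    have hFw : F w = F (conj z) := by
      refine hprod hJ (h.symm.trans ?_)
      rw [hFD z hz]
      ext <;> exact liftAux_neg_apply hJ _
    rw [hF hw (hD hz) hFw, liftAux_neg_apply]
  · obtain ⟨h₁, hz₁⟩ :=
      eq_and_im_eq_zero_of_liftAux_eq hI hJ (congrArg Prod.fst h) hIJ hIJ'
    obtain ⟨h₂, hz₂⟩ :=
      eq_and_im_eq_zero_of_liftAux_eq hI hJ (congrArg Prod.snd h) hIJ hIJ'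
    have hFz : F (conj z) = F z := by
      rw [hFD z hz, Prod.star_def, star_def, conj_eq_iff_im.2 hz₁, conj_eq_iff_im.2 hz₂]
    have hzw : w = z := hF hw hz (Prod.ext h₁ h₂)
    have hzr : z.im = 0 := conj_eq_iff_im.1 (hF (hD hz) hz hFz)
    rw [hzw, liftAux_apply_of_im_eq_zero hI hzr, liftAux_apply_of_im_eq_zero hJ hzr]

end Complex

/-- If `F = (G₁ + ιG₂, H₁ + ιH₂)` is an injective real stem map on a conjugation-symmetric
set `D ⊆ ℂ` satisfying the intrinsic conditions (`G₁, H₁` even and `G₂, H₂` odd in the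
imaginary part), then the induced slice map
`f(x + Iy) = (G₁(x+iy) + I G₂(x+iy), H₁(x+iy) + I H₂(x+iy))` on the symmetrization of `D`
in `ℍ` is injective. -/
theorem induced_slice_map_injective
    (D : Set ℂ) (hD : (starRingEnd ℂ) '' D = D)
    (G₁ G₂ H₁ H₂ : ℂ → ℝ)
    (hG₁ : ∀ z ∈ D, G₁ ((starRingEnd ℂ) z) = G₁ z)
    (hH₁ : ∀ z ∈ D, H₁ ((starRingEnd ℂ) z) = H₁ z)
    (hG₂ : ∀ z ∈ D, G₂ ((starRingEnd ℂ) z) = -G₂ z)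
    (hH₂ : ∀ z ∈ D, H₂ ((starRingEnd ℂ) z) = -H₂ z)
    (hinj : Set.InjOn (fun z => ((⟨G₁ z, G₂ z⟩ : ℂ), (⟨H₁ z, H₂ z⟩ : ℂ))) D) :
    ∀ (x y u v : ℝ) (I J : ℍ[ℝ]), I ^ 2 = -1 → J ^ 2 = -1 →
      0 ≤ y → 0 ≤ v → (⟨x, y⟩ : ℂ) ∈ D → (⟨u, v⟩ : ℂ) ∈ D →
      (((G₁ ⟨x, y⟩ : ℝ) : ℍ[ℝ]) + G₂ ⟨x, y⟩ • I,
        ((H₁ ⟨x, y⟩ : ℝ) : ℍ[ℝ]) + H₂ ⟨x, y⟩ • I) =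
      (((G₁ ⟨u, v⟩ : ℝ) : ℍ[ℝ]) + G₂ ⟨u, v⟩ • J,
        ((H₁ ⟨u, v⟩ : ℝ) : ℍ[ℝ]) + H₂ ⟨u, v⟩ • J) →
      ((x : ℍ[ℝ]) + y • I = (u : ℍ[ℝ]) + v • J) := by
  intro x y u v I J hI hJ _ _ hz hw h
  rw [sq] at hI hJ
  have hslice : ∀ {K : ℍ[ℝ]} (hK : K * K = -1) (a b : ℝ),
      (a : ℍ[ℝ]) + b • K = Complex.liftAux K hK ⟨a, b⟩ := by
    simp [Complex.liftAux_apply, Quaternion.algebraMap_def]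
  set F : ℂ → ℂ × ℂ := fun z => ((⟨G₁ z, G₂ z⟩ : ℂ), (⟨H₁ z, H₂ z⟩ : ℂ))
  have hF : IsIntrinsicOn F D := fun z hz => by
    refine Prod.ext (Complex.ext ?_ ?_) (Complex.ext ?_ ?_) <;>
      simp [F, hG₁ z hz, hG₂ z hz, hH₁ z hz, hH₂ z hz]
  simp only [hslice hI, hslice hJ] at h ⊢
  exact Complex.liftAux_eq_liftAux_of_isIntrinsicOn
    ((Set.mapsTo_image _ D).mono_right hD.subset) hinj hF hI hJ hz hw h
end

section
/- The quaternionic helicoidal map f : ℍ → ℍ × Im(ℍ) defined by f(x+Iy) = (sinh x · cos y + I sinh x · sin y, I y) (for I² = -1, x, y ∈ ℝ, with the convention that for y = 0 the value is (sinh x, 0)) is well defined and injective. -/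
/-!
The first component of `f(x + Iy)` is `sinh x • exp (y • I)`, computed through the embedding
`ℂ →ₐ[ℝ] ℍ` sending `i` to `I`. Since `exp (y • I)` is a unit that depends only on the second
component `y • I`, equality of images forces `y • I = v • J` and then `sinh x = sinh u`.
-/

open Quaternion

section
open NormedSpace

variable {A : Type*} [NormedRing A] [NormedAlgebra ℝ A] [Algebra ℚ A] (I : A)

theorem exp_smul_eq_liftAux_exp (hI : I * I = -1) (y : ℝ) :
    exp (y • I) = Complex.liftAux I hI (Complex.exp (y * Complex.I)) := by
  let φ := Complex.liftAux I hI
  have hφ : Continuous φ := φ.toLinearMap.continuous_of_finiteDimensional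
  rw [Complex.exp_eq_exp_ℂ, map_exp φ hφ]
  simp [φ]

theorem isUnit_exp_smul (hI : I * I = -1) (y : ℝ) : IsUnit (exp (y • I)) := by
  rw [exp_smul_eq_liftAux_exp I hI]
  exact (Complex.exp_ne_zero _).isUnit.map _

theorem exp_smul_eq_cos_add_sin_smul (hI : I * I = -1) (y : ℝ) :
    exp (y • I) = algebraMap ℝ A (Real.cos y) + Real.sin y • I := by
  simp [exp_smul_eq_liftAux_exp I hI, Complex.exp_mul_I, Complex.cos_ofReal_re,
    Complex.sin_ofReal_re]

end

theorem Quaternion.coe_mul_cos_add_mul_sin_smul_eq_smul_exp (c y : ℝ) {I : ℍ[ℝ]}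
    (hI : I * I = -1) :
    ((c * Real.cos y : ℝ) : ℍ[ℝ]) + (c * Real.sin y) • I = c • NormedSpace.exp (y • I) := by
  rw [exp_smul_eq_cos_add_sin_smul I hI, smul_add, smul_smul, algebraMap_def, ← coe_smul,
    smul_eq_mul]

/-- The quaternionic helicoidal map `f(x + Iy) = (sinh x cos y + I sinh x sin y, Iy)` is
well defined (its value does not depend on the representation of `x + Iy`, in particular
`x + Iy = x + (-I)(-y)` and at real points it does not depend on `I`) and injective. -/
theorem helicoidal_map_well_defined_and_injective :
    let F : ℝ → ℝ → ℍ[ℝ] → ℍ[ℝ] × ℍ[ℝ] := fun x y I =>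
      (((Real.sinh x * Real.cos y : ℝ) : ℍ[ℝ]) + (Real.sinh x * Real.sin y) • I, y • I)
    (∀ (x y : ℝ) (I : ℍ[ℝ]), I ^ 2 = -1 → F x y I = F x (-y) (-I)) ∧
    (∀ (x : ℝ) (I J : ℍ[ℝ]), I ^ 2 = -1 → J ^ 2 = -1 → F x 0 I = F x 0 J) ∧
    (∀ (x y u v : ℝ) (I J : ℍ[ℝ]), I ^ 2 = -1 → J ^ 2 = -1 →
      F x y I = F u v J → (x : ℍ[ℝ]) + y • I = (u : ℍ[ℝ]) + v • J) := by
  intro F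
  refine ⟨fun x y I _ => by simp [F], fun x I J _ _ => by simp [F],
    fun x y u v I J hI hJ hF => ?_⟩
  rw [sq] at hI hJ
  obtain ⟨hfirst, hsecond⟩ := Prod.ext_iff.mp hF
  simp only [F, coe_mul_cos_add_mul_sin_smul_eq_smul_exp _ _ hI,
    coe_mul_cos_add_mul_sin_smul_eq_smul_exp _ _ hJ] at hfirst hsecond
  rw [hsecond] at hfirst
  have hsinh : Real.sinh x = Real.sinh u :=
    smul_left_injective ℝ (isUnit_exp_smul J hJ v).ne_zero hfirst
  rw [Real.sinh_injective hsinh, hsecond]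
end

section
/- At a point x + Iy with y ≠ 0, the differential of the quaternionic helicoidal map f(x+Iy) = (sinh x cos y + I sinh x sin y, Iy) restricted to the slice ℂ_I = span{1, I} is conformal: the two column vectors df(x+Iy)·1 = (cosh x cos y + I cosh x sin y, 0) and df(x+Iy)·I = (-sinh x sin y + I sinh x cos y, I) are orthogonal in ℝ⁷ and have equal Euclidean norms. -/
/-! A square root `I` of `-1` in `ℍ` is a unit purely imaginary quaternion, so the
slice `span {1, I}` is an isometric copy of `ℂ`. Hence
`⟪u, w⟫ = cosh x sinh x (-cos y sin y + sin y cos y) = 0`,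
`‖u‖² = cosh² x` and `‖w‖² = sinh² x + ‖I‖² = cosh² x`. -/

open Quaternion
open scoped RealInnerProductSpace

namespace Quaternion

section sqrtNegOne

variable {R : Type*} [CommRing R] [LinearOrder R] [IsStrictOrderedRing R] {I : ℍ[R]}

theorem normSq_eq_one_of_sq_eq_neg_one (hI : I ^ 2 = -1) : normSq I = 1 := by
  have h : normSq I ^ 2 = 1 := by rw [← map_pow, hI, normSq_neg, map_one]
  exact (pow_eq_one_iff_of_nonneg normSq_nonneg two_ne_zero).mp h

theorem re_eq_zero_of_sq_eq_neg_one (hI : I ^ 2 = -1) : I.re = 0 := by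
  rw [← sq_eq_neg_normSq, hI, normSq_eq_one_of_sq_eq_neg_one hI, coe_one]

end sqrtNegOne

theorem inner_coe_left (r : ℝ) (q : ℍ[ℝ]) : ⟪(r : ℍ[ℝ]), q⟫ = r * q.re := by
  simp [inner_def]

theorem inner_self_eq_one_of_sq_eq_neg_one {I : ℍ[ℝ]} (hI : I ^ 2 = -1) : ⟪I, I⟫ = 1 := by
  rw [inner_self, normSq_eq_one_of_sq_eq_neg_one hI]

theorem inner_coe_add_smul_of_sq_eq_neg_one {I : ℍ[ℝ]} (hI : I ^ 2 = -1) (a b c d : ℝ) :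
    ⟪(a : ℍ[ℝ]) + b • I, (c : ℍ[ℝ]) + d • I⟫ = a * c + b * d := by
  simp only [inner_add_left, inner_add_right, real_inner_smul_left, real_inner_smul_right,
    real_inner_comm (c : ℍ[ℝ]) I, inner_coe_left, re_coe, re_eq_zero_of_sq_eq_neg_one hI,
    inner_self_eq_one_of_sq_eq_neg_one hI]
  ring

end Quaternion

theorem helicoidal_slice_differential_conformal_general
    (I : ℍ[ℝ]) (hI : I ^ 2 = -1) (x y : ℝ) :
    let u : WithLp 2 (ℍ[ℝ] × ℍ[ℝ]) := (WithLp.equiv 2 (ℍ[ℝ] × ℍ[ℝ])).symm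
      (((Real.cosh x * Real.cos y : ℝ) : ℍ[ℝ]) + (Real.cosh x * Real.sin y) • I, 0)
    let w : WithLp 2 (ℍ[ℝ] × ℍ[ℝ]) := (WithLp.equiv 2 (ℍ[ℝ] × ℍ[ℝ])).symm
      (((-(Real.sinh x * Real.sin y) : ℝ) : ℍ[ℝ]) + (Real.sinh x * Real.cos y) • I, I)
    ⟪u, w⟫ = 0 ∧ ⟪u, u⟫ = ⟪w, w⟫ ∧ ⟪u, u⟫ = Real.cosh x ^ 2 := by
  intro u w
  simp only [u, w, WithLp.prod_inner_apply, WithLp.equiv_symm_apply,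
    inner_coe_add_smul_of_sq_eq_neg_one hI, inner_self_eq_one_of_sq_eq_neg_one hI,
    inner_zero_left, inner_zero_right]
  have hsc := Real.sin_sq_add_cos_sq y
  refine ⟨by ring, ?_, ?_⟩
  · linear_combination (Real.cosh x ^ 2 - Real.sinh x ^ 2) * hsc + Real.cosh_sq x
  · linear_combination Real.cosh x ^ 2 * hsc

/-- At a point `x + Iy` with `y ≠ 0`, the differential of the quaternionic helicoidal map
restricted to the slice `ℂ_I` is conformal: the columns
`df·1 = (cosh x cos y + I cosh x sin y, 0)` and `df·I = (-sinh x sin y + I sinh x cos y, I)`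
are orthogonal in `ℝ⁷ ≅ ℍ × Im(ℍ)` and have equal squared norm `cosh² x`. -/
theorem helicoidal_slice_differential_conformal
    (I : ℍ[ℝ]) (hI : I ^ 2 = -1) (x y : ℝ) (hy : y ≠ 0) :
    let u : WithLp 2 (ℍ[ℝ] × ℍ[ℝ]) := (WithLp.equiv 2 (ℍ[ℝ] × ℍ[ℝ])).symm
      (((Real.cosh x * Real.cos y : ℝ) : ℍ[ℝ]) + (Real.cosh x * Real.sin y) • I, 0)
    let w : WithLp 2 (ℍ[ℝ] × ℍ[ℝ]) := (WithLp.equiv 2 (ℍ[ℝ] × ℍ[ℝ])).symm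
      (((-(Real.sinh x * Real.sin y) : ℝ) : ℍ[ℝ]) + (Real.sinh x * Real.cos y) • I, I)
    ⟪u, w⟫ = 0 ∧ ⟪u, u⟫ = ⟪w, w⟫ ∧ ⟪u, u⟫ = Real.cosh x ^ 2 :=
  helicoidal_slice_differential_conformal_general I hI x y
end

section
/- The quaternionic E-exponential E : ℍ → ℍ × Im(ℍ), E(x+Iy) = (exp x (cos y + I sin y), Iy), is injective, and the map L(q,p) = log|q| + p defined on its image satisfies L ∘ E = id_ℍ and E ∘ L = id on the image; hence E is a bijection onto its image with inverse L. -/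
open Quaternion NormedSpace

theorem Quaternion.log_norm_exp (q : ℍ[ℝ]) : Real.log ‖exp q‖ = q.re := by
  rw [Quaternion.norm_exp, ← Real.exp_eq_exp_ℝ, Real.norm_of_nonneg (Real.exp_pos _).le,
    Real.log_exp]

theorem Quaternion.log_norm_exp_add_im (q : ℍ[ℝ]) :
    ((Real.log ‖exp q‖ : ℝ) : ℍ[ℝ]) + q.im = q := by
  rw [Quaternion.log_norm_exp, Quaternion.re_add_im]

/-- The quaternionic `𝓔⁺`-exponential `E(q) = (exp q, Im q)` (i.e.
`E(x+Iy) = (exp x (cos y + I sin y), Iy)`) is injective, and the map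
`L(q, p) = log |q| + p` satisfies `L ∘ E = id` on `ℍ` and `E ∘ L = id` on the image of `E`;
hence `E` is a bijection onto its image with inverse `L`. -/
theorem E_exponential_bijective_with_inverse_L :
    let E : ℍ[ℝ] → ℍ[ℝ] × ℍ[ℝ] := fun q => (exp q, (q.im : ℍ[ℝ]))
    let L : ℍ[ℝ] × ℍ[ℝ] → ℍ[ℝ] := fun p => ((Real.log ‖p.1‖ : ℝ) : ℍ[ℝ]) + p.2
    Function.Injective E ∧ (∀ q : ℍ[ℝ], L (E q) = q) ∧
      (∀ p ∈ Set.range E, E (L p) = p) := by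
  intro E L
  have hLE : Function.LeftInverse L E := Quaternion.log_norm_exp_add_im
  exact ⟨hLE.injective, hLE, fun _ hp => hLE.rightInvOn_range hp⟩
end
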